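/- Let G be a closed subgroup of the symmetric group on a countable set Ω and H a closed subgroup of the symmetric group on a countable set Ω'. Every continuous group homomorphism ξ : G → H extends to a continuous monoid homomorphism ξ̄ : Ḡ → H̄ between the topological closures of G and H in Ω^Ω and Ω'^Ω' respectively; moreover, if ξ is a topological group isomorphism, then ξ̄ is a monoid isomorphism and a homeomorphism. -/

import Mathlib

/-- The set of functions underlying a subgroup of the symmetric group on Ω. -/
def permSet {Ω : Type*} (G : Subgroup (Equiv.Perm Ω)) : Set (Ω → Ω) :=
  {f : Ω → Ω | ∃ g ∈ G, ⇑g = f}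

/-- In a product of discrete spaces, membership in the closure of a set is equivalent to
agreeing with some member of the set on every finite set of coordinates. -/
lemma mem_closure_pi_iff' {ι α : Type*} [TopologicalSpace α] [DiscreteTopology α]
    {S : Set (ι → α)} {f : ι → α} :
    f ∈ closure S ↔ ∀ T : Finset ι, ∃ g ∈ S, ∀ x ∈ T, g x = f x := by
  constructor
  · intro h T
    have hop : IsOpen {g : ι → α | ∀ x ∈ (T : Set ι), g x = f x} := by
      have heq : {g : ι → α | ∀ x ∈ (T : Set ι), g x = f x}
          = Set.pi (T : Set ι) (fun x => {f x}) := by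
        ext g; simp [Set.pi]
      rw [heq]
      exact isOpen_set_pi T.finite_toSet (fun i _ => isOpen_discrete _)
    obtain ⟨g, hgU, hgS⟩ := mem_closure_iff.mp h _ hop (by simp)
    exact ⟨g, hgS, fun x hx => hgU x hx⟩
  · intro h
    rw [mem_closure_iff]
    intro U hU hfU
    obtain ⟨I, u, h1, h2⟩ := isOpen_pi_iff.mp hU f hfU
    obtain ⟨g, hgS, hg⟩ := h I
    refine ⟨g, h2 fun x hx => ?_, hgS⟩
    rw [hg x hx]
    exact (h1 x hx).2

/-- Key "uniform continuity" lemma: for each target coordinate there is a finite set of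
source coordinates that determines the value of ξ at that coordinate. -/
lemma key_lemma' {Ω Ω' : Type*} [TopologicalSpace Ω] [DiscreteTopology Ω]
    [TopologicalSpace Ω'] [DiscreteTopology Ω']
    (G : Subgroup (Equiv.Perm Ω)) (H : Subgroup (Equiv.Perm Ω'))
    (ξ : ↥(permSet G) → ↥(permSet H)) (hξcont : Continuous ξ)
    (hξmul : ∀ a b c : ↥(permSet G), c.1 = a.1 ∘ b.1 → (ξ c).1 = (ξ a).1 ∘ (ξ b).1)
    (ω' : Ω') :
    ∃ F : Finset Ω, ∀ a b : ↥(permSet G), (∀ x ∈ F, a.1 x = b.1 x) →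
      (ξ a).1 ω' = (ξ b).1 ω' := by
  classical
  set e : ↥(permSet G) := ⟨id, 1, G.one_mem, Equiv.Perm.coe_one⟩ with he
  have hξe : (ξ e).1 = id := by
    have hm := hξmul e e e rfl
    obtain ⟨η, hη, hηe⟩ := (ξ e).2
    have hinj : Function.Injective (ξ e).1 := by rw [← hηe]; exact η.injective
    funext y
    have hy := congrFun hm y
    exact (hinj hy).symm
  have hcont : Continuous fun g : ↥(permSet G) => (ξ g).1 ω' :=
    (continuous_apply ω').comp (continuous_subtype_val.comp hξcont)
  have hopen : IsOpen ((fun g : ↥(permSet G) => (ξ g).1 ω') ⁻¹' {ω'}) :=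
    (isOpen_discrete _).preimage hcont
  obtain ⟨V, hV, hVeq⟩ := isOpen_induced_iff.mp hopen
  have heV : (id : Ω → Ω) ∈ V := by
    have hmem : e ∈ (fun g : ↥(permSet G) => (ξ g).1 ω') ⁻¹' {ω'} := by
      simp only [Set.mem_preimage, Set.mem_singleton_iff, hξe, id]
    rw [← hVeq] at hmem
    exact hmem
  obtain ⟨I, u, h1, h2⟩ := isOpen_pi_iff.mp hV id heV
  refine ⟨I, fun a b hab => ?_⟩
  obtain ⟨α, hα, hαa⟩ := a.2
  obtain ⟨β, hβ, hβb⟩ := b.2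
  set c : ↥(permSet G) := ⟨⇑(β⁻¹ * α), β⁻¹ * α, mul_mem (inv_mem hβ) hα, rfl⟩ with hc
  have hcfix : ∀ x ∈ I, c.1 x = x := by
    intro x hx
    show (β⁻¹ * α) x = x
    rw [Equiv.Perm.mul_apply]
    have h3 : α x = β x := by
      rw [hαa, hβb]; exact hab x hx
    rw [h3, Equiv.Perm.inv_def, Equiv.symm_apply_apply]
  have hcV : c.1 ∈ V := by
    apply h2
    intro x hx
    have hx' : x ∈ I := hx
    rw [hcfix x hx']
    exact (h1 x hx').2
  have hcfixω : (ξ c).1 ω' = ω' := by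
    have : c ∈ (fun g : ↥(permSet G) => (ξ g).1 ω') ⁻¹' {ω'} := by
      rw [← hVeq]; exact hcV
    exact this
  have hprem : a.1 = b.1 ∘ c.1 := by
    funext x
    show a.1 x = b.1 ((β⁻¹ * α) x)
    rw [← hαa, ← hβb]
    show (α : Equiv.Perm Ω) x = β ((β⁻¹ * α) x)
    rw [Equiv.Perm.mul_apply, Equiv.Perm.inv_def, Equiv.apply_symm_apply]
  have := congrFun (hξmul b c a hprem) ω'
  rw [this]
  show (ξ b).1 ((ξ c).1 ω') = (ξ b).1 ω'
  rw [hcfixω]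

/-- Extension lemma: ξ extends to the closures, with a pointwise "determined by finitely
many coordinates" property and preservation of composition. -/
lemma ext_lemma' {Ω Ω' : Type*} [TopologicalSpace Ω] [DiscreteTopology Ω]
    [TopologicalSpace Ω'] [DiscreteTopology Ω']
    (G : Subgroup (Equiv.Perm Ω)) (H : Subgroup (Equiv.Perm Ω'))
    (ξ : ↥(permSet G) → ↥(permSet H)) (hξcont : Continuous ξ)
    (hξmul : ∀ a b c : ↥(permSet G), c.1 = a.1 ∘ b.1 → (ξ c).1 = (ξ a).1 ∘ (ξ b).1) :
    ∃ (ξbar : ↥(closure (permSet G)) → ↥(closure (permSet H))) (F : Ω' → Finset Ω),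
      Continuous ξbar ∧
      (∀ (f : ↥(closure (permSet G))) (ω' : Ω') (g : ↥(permSet G)),
        (∀ x ∈ F ω', g.1 x = f.1 x) → (ξbar f).1 ω' = (ξ g).1 ω') ∧
      (∀ a b c : ↥(closure (permSet G)), c.1 = a.1 ∘ b.1 →
        (ξbar c).1 = (ξbar a).1 ∘ (ξbar b).1) := by
  classical
  choose F hF using key_lemma' G H ξ hξcont hξmul
  have wit : ∀ (f : ↥(closure (permSet G))) (T : Finset Ω),
      ∃ g : ↥(permSet G), ∀ x ∈ T, g.1 x = f.1 x := by
    intro f T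
    obtain ⟨g, hgS, hg⟩ := mem_closure_pi_iff'.mp f.2 T
    exact ⟨⟨g, hgS⟩, hg⟩
  choose w hw using wit
  set ξb0 : ↥(closure (permSet G)) → Ω' → Ω' :=
    fun f ω' => (ξ (w f (F ω'))).1 ω' with hξb0
  have hW0 : ∀ (f : ↥(closure (permSet G))) (ω' : Ω') (g : ↥(permSet G)),
      (∀ x ∈ F ω', g.1 x = f.1 x) → ξb0 f ω' = (ξ g).1 ω' := by
    intro f ω' g hg
    exact hF ω' (w f (F ω')) g (fun x hx => by rw [hw f (F ω') x hx, hg x hx])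
  have hmem : ∀ f, ξb0 f ∈ closure (permSet H) := by
    intro f
    rw [mem_closure_pi_iff']
    intro T
    refine ⟨(ξ (w f (T.biUnion F))).1, (ξ (w f (T.biUnion F))).2, fun ω' hω' => ?_⟩
    exact (hW0 f ω' (w f (T.biUnion F))
      (fun x hx => hw f (T.biUnion F) x (Finset.mem_biUnion.mpr ⟨ω', hω', hx⟩))).symm
  refine ⟨fun f => ⟨ξb0 f, hmem f⟩, F, ?_, ?_, ?_⟩
  · apply Continuous.subtype_mk
    apply continuous_pi
    intro ω'
    rw [continuous_discrete_rng]
    intro v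
    rw [isOpen_iff_forall_mem_open]
    intro f hf
    refine ⟨Subtype.val ⁻¹' {h : Ω → Ω | ∀ x ∈ (F ω' : Set Ω), h x = f.1 x},
      ?_, ?_, fun x hx => rfl⟩
    · intro f' hf'
      have heq : ξb0 f' ω' = ξb0 f ω' := by
        rw [hW0 f' ω' (w f (F ω'))
          (fun x hx => by rw [hw f (F ω') x hx]; exact (hf' x hx).symm)]
      have hfv : ξb0 f ω' = v := hf
      show ξb0 f' ω' ∈ ({v} : Set Ω')
      rw [Set.mem_singleton_iff, heq, hfv]
    · apply IsOpen.preimage continuous_subtype_val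
      have heq : {h : Ω → Ω | ∀ x ∈ (F ω' : Set Ω), h x = f.1 x}
          = Set.pi (F ω' : Set Ω) (fun x => {f.1 x}) := by
        ext h; simp [Set.pi]
      rw [heq]
      exact isOpen_set_pi (F ω').finite_toSet (fun i _ => isOpen_discrete _)
  · exact hW0
  · intro a b c hc
    funext ω'
    show ξb0 c ω' = ξb0 a (ξb0 b ω')
    set gb := w b (F ω') with hgb
    set ω₂ := ξb0 b ω' with hω₂
    set T := F ω₂ ∪ (F ω').image gb.1 with hT
    set ga := w a T with hga
    obtain ⟨α, hαG, hα⟩ := ga.2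
    obtain ⟨β, hβG, hβ⟩ := gb.2
    set gc : ↥(permSet G) := ⟨⇑(α * β), α * β, mul_mem hαG hβG, rfl⟩ with hgc
    have hcomp : gc.1 = ga.1 ∘ gb.1 := by
      funext x
      show (α * β) x = ga.1 (gb.1 x)
      rw [Equiv.Perm.mul_apply, hα, hβ]
    have h1 : ξb0 c ω' = (ξ gc).1 ω' := by
      apply hW0
      intro x hx
      have hbx : gb.1 x = b.1 x := hw b (F ω') x hx
      have hmem2 : b.1 x ∈ T := by
        rw [hT]
        apply Finset.mem_union_right
        rw [← hbx]
        exact Finset.mem_image_of_mem _ hx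
      calc gc.1 x = ga.1 (gb.1 x) := congrFun hcomp x
        _ = ga.1 (b.1 x) := by rw [hbx]
        _ = a.1 (b.1 x) := hw a T _ hmem2
        _ = c.1 x := (congrFun hc x).symm
    have h2 : (ξ gc).1 = (ξ ga).1 ∘ (ξ gb).1 := hξmul ga gb gc hcomp
    have h3 : (ξ gb).1 ω' = ω₂ := (hW0 b ω' gb (hw b (F ω'))).symm
    have h4 : (ξ ga).1 ω₂ = ξb0 a ω₂ :=
      (hW0 a ω₂ ga (fun x hx => hw a T x (Finset.mem_union_left _ hx))).symm
    rw [h1, congrFun h2 ω']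
    show (ξ ga).1 ((ξ gb).1 ω') = ξb0 a (ξb0 b ω')
    rw [h3, h4]

/-- Let G, H be closed subgroups of the symmetric groups on countable sets
Ω, Ω'. Every continuous group homomorphism ξ : G → H extends to a continuous monoid
homomorphism ξ̄ : Ḡ → H̄ between the closures in Ω^Ω and Ω'^Ω'; moreover if ξ is a
topological group isomorphism then ξ̄ is a monoid isomorphism and a homeomorphism. -/
theorem stmt_14 {Ω Ω' : Type*} [Countable Ω] [TopologicalSpace Ω] [DiscreteTopology Ω]
    [Countable Ω'] [TopologicalSpace Ω'] [DiscreteTopology Ω']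
    (G : Subgroup (Equiv.Perm Ω)) (H : Subgroup (Equiv.Perm Ω'))
    (hGclosed : ∀ f : Ω → Ω, f ∈ closure (permSet G) → Function.Bijective f →
      f ∈ permSet G)
    (hHclosed : ∀ f : Ω' → Ω', f ∈ closure (permSet H) → Function.Bijective f →
      f ∈ permSet H)
    (ξ : ↥(permSet G) → ↥(permSet H))
    (hξcont : Continuous ξ)
    (hξmul : ∀ a b c : ↥(permSet G), c.1 = a.1 ∘ b.1 → (ξ c).1 = (ξ a).1 ∘ (ξ b).1) :
    ∃ ξbar : ↥(closure (permSet G)) → ↥(closure (permSet H)),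
      Continuous ξbar ∧
      (∀ (a : ↥(closure (permSet G))) (ha : a.1 ∈ permSet G),
        (ξbar a).1 = (ξ ⟨a.1, ha⟩).1) ∧
      (∀ a b c : ↥(closure (permSet G)), c.1 = a.1 ∘ b.1 →
        (ξbar c).1 = (ξbar a).1 ∘ (ξbar b).1) ∧
      (∀ ξinv : ↥(permSet H) → ↥(permSet G), Continuous ξinv →
        Function.LeftInverse ξinv ξ → Function.RightInverse ξinv ξ →
        Function.Bijective ξbar ∧
        ∃ ψ : ↥(closure (permSet H)) → ↥(closure (permSet G)),
          Continuous ψ ∧ Function.LeftInverse ψ ξbar ∧ Function.RightInverse ψ ξbar) := by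
  classical
  obtain ⟨ξbar, F, hcont, hW, hmul⟩ := ext_lemma' G H ξ hξcont hξmul
  refine ⟨ξbar, hcont, ?_, hmul, ?_⟩
  · intro a ha
    funext ω'
    exact hW a ω' ⟨a.1, ha⟩ (fun x hx => rfl)
  · intro ξinv hinvcont hleft hright
    have hξinvmul : ∀ a b c : ↥(permSet H), c.1 = a.1 ∘ b.1 →
        (ξinv c).1 = (ξinv a).1 ∘ (ξinv b).1 := by
      intro a b c hc
      obtain ⟨α, hαG, hα⟩ := (ξinv a).2
      obtain ⟨β, hβG, hβ⟩ := (ξinv b).2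
      set d : ↥(permSet G) := ⟨⇑(α * β), α * β, mul_mem hαG hβG, rfl⟩ with hd
      have hdcomp : d.1 = (ξinv a).1 ∘ (ξinv b).1 := by
        funext x
        show (α * β) x = (ξinv a).1 ((ξinv b).1 x)
        rw [Equiv.Perm.mul_apply, hα, hβ]
      have hξd : ξ d = c := by
        apply Subtype.ext
        rw [hξmul (ξinv a) (ξinv b) d hdcomp, hright a, hright b]
        exact hc.symm
      have hdc : ξinv c = d := by rw [← hξd, hleft d]
      rw [hdc]
      exact hdcomp
    obtain ⟨ψ, F', hψcont, hW', hψmul⟩ := ext_lemma' H G ξinv hinvcont hξinvmul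
    have hL : Function.LeftInverse ψ ξbar := by
      intro f
      apply Subtype.ext
      funext ω
      obtain ⟨g0, hg0S, hg0⟩ :=
        mem_closure_pi_iff'.mp f.2 (((F' ω).biUnion F) ∪ {ω})
      set g : ↥(permSet G) := ⟨g0, hg0S⟩ with hg
      have hgf : ∀ x ∈ ((F' ω).biUnion F) ∪ {ω}, g.1 x = f.1 x := hg0
      have hstep : ∀ x ∈ F' ω, (ξ g).1 x = (ξbar f).1 x := by
        intro x hx
        exact (hW f x g (fun y hy => hgf y
          (Finset.mem_union_left _ (Finset.mem_biUnion.mpr ⟨x, hx, hy⟩)))).symm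
      have h1 : (ψ (ξbar f)).1 ω = (ξinv (ξ g)).1 ω := hW' (ξbar f) ω (ξ g) hstep
      rw [h1, hleft g]
      exact hgf ω (Finset.mem_union_right _ (Finset.mem_singleton_self ω))
    have hR : Function.RightInverse ψ ξbar := by
      intro h
      apply Subtype.ext
      funext ω'
      obtain ⟨g0, hg0S, hg0⟩ :=
        mem_closure_pi_iff'.mp h.2 (((F ω').biUnion F') ∪ {ω'})
      set g : ↥(permSet H) := ⟨g0, hg0S⟩ with hg
      have hgh : ∀ x ∈ ((F ω').biUnion F') ∪ {ω'}, g.1 x = h.1 x := hg0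
      have hstep : ∀ x ∈ F ω', (ξinv g).1 x = (ψ h).1 x := by
        intro x hx
        exact (hW' h x g (fun y hy => hgh y
          (Finset.mem_union_left _ (Finset.mem_biUnion.mpr ⟨x, hx, hy⟩)))).symm
      have h1 : (ξbar (ψ h)).1 ω' = (ξ (ξinv g)).1 ω' := hW (ψ h) ω' (ξinv g) hstep
      rw [h1, hright g]
      exact hgh ω' (Finset.mem_union_right _ (Finset.mem_singleton_self ω'))
    exact ⟨Function.bijective_iff_has_inverse.mpr ⟨ψ, hL, hR⟩, ψ, hψcont, hL, hR⟩
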